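/- arXiv:2403.09695 — 2 statements merged into one kernel-verified Lean document; each statement's English description precedes it below -/
import Mathlib

section
/- For all a > 0 and b ∈ (0,1): B(a,b) < -γ + 1/a - ψ(b) and the right-hand side satisfies -γ + 1/a - ψ(b) < 1/a + 1/b (using that -γ - ψ(1+b) < 0 for b > 0). -/
/-- The digamma function ψ = Γ'/Γ, as the derivative of log ∘ Γ. -/
noncomputable def digamma (x : ℝ) : ℝ := deriv (fun y => Real.log (Real.Gamma y)) x

/-- The Euler–Mascheroni constant γ = -ψ(1). -/
noncomputable def eulerGamma : ℝ := -digamma 1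

/-!
For `c > 0` the function `a ↦ B(a, c) - 1/a = ∫₀¹ t^(a-1) ((1-t)^(c-1) - 1) dt` is strictly
decreasing on `a > 0` when `c < 1` and strictly increasing when `c > 1`. It is also the difference
quotient at `0` of `x ↦ Γ(x+1) Γ(c) / Γ(x+c)`, so it tends to `ψ(1) - ψ(c)` as `a → 0⁺`.
For `c = b < 1` this gives `B(a, b) - 1/a < ψ(1) - ψ(b)`. For `c = 1 + b` it gives
`ψ(1) - ψ(1+b) < B(1, 1+b) - 1 = 1/(1+b) - 1 < 0`, which together with `ψ(1+b) = ψ(b) + 1/b`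
is the second inequality.
-/

open Real Set Filter Topology MeasureTheory ProbabilityTheory

lemma differentiableAt_Gamma_of_pos {x : ℝ} (hx : 0 < x) : DifferentiableAt ℝ Gamma x :=
  differentiableAt_Gamma fun m hm => by linarith [hm ▸ hx, (Nat.cast_nonneg m : (0 : ℝ) ≤ m)]

lemma hasDerivAt_log_Gamma {x : ℝ} (hx : 0 < x) :
    HasDerivAt (fun y => log (Gamma y)) (digamma x) x :=
  ((differentiableAt_Gamma_of_pos hx).log (Gamma_pos_of_pos hx).ne').hasDerivAt

lemma hasDerivAt_Gamma_of_pos {x : ℝ} (hx : 0 < x) :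
    HasDerivAt Gamma (Gamma x * digamma x) x := by
  have h := (hasDerivAt_log_Gamma hx).exp
  rw [exp_log (Gamma_pos_of_pos hx)] at h
  refine h.congr_of_eventuallyEq ?_
  filter_upwards [eventually_gt_nhds hx] with y hy
  exact (exp_log (Gamma_pos_of_pos hy)).symm

lemma digamma_add_one {x : ℝ} (hx : 0 < x) : digamma (x + 1) = digamma x + 1 / x := by
  have hshift : HasDerivAt (fun y => log (Gamma (y + 1))) (digamma (x + 1)) x :=
    (hasDerivAt_log_Gamma (by linarith)).comp_add_const x 1
  have hsplit : HasDerivAt (fun y => log y + log (Gamma y)) (1 / x + digamma x) x := by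
    rw [one_div]
    exact (hasDerivAt_log hx.ne').add (hasDerivAt_log_Gamma hx)
  have heq : (fun y => log (Gamma (y + 1))) =ᶠ[𝓝 x] fun y => log y + log (Gamma y) := by
    filter_upwards [eventually_gt_nhds hx] with y hy
    rw [Gamma_add_one hy.ne', log_mul hy.ne' (Gamma_pos_of_pos hy).ne']
  linarith [hshift.unique (hsplit.congr_of_eventuallyEq heq)]

lemma beta_one_left {c : ℝ} (hc : 0 < c) : beta 1 c = 1 / c := by
  rw [beta, Gamma_one, one_mul, add_comm, Gamma_add_one hc.ne']
  field_simp [(Gamma_pos_of_pos hc).ne']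

lemma betaIntegrand_eq_ofReal {a c t : ℝ} (ht₀ : 0 ≤ t) (ht₁ : t ≤ 1) :
    (t : ℂ) ^ ((a : ℂ) - 1) * (1 - (t : ℂ)) ^ ((c : ℂ) - 1) =
      ↑(t ^ (a - 1) * (1 - t) ^ (c - 1)) := by
  rw [Complex.ofReal_mul, Complex.ofReal_cpow ht₀, Complex.ofReal_cpow (by linarith)]
  push_cast
  ring

lemma intervalIntegrable_betaIntegrand {a c : ℝ} (ha : 0 < a) (hc : 0 < c) :
    IntervalIntegrable (fun t => t ^ (a - 1) * (1 - t) ^ (c - 1)) volume 0 1 := by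
  have h := Complex.betaIntegral_convergent (u := a) (v := c) (by simpa) (by simpa)
  rw [intervalIntegrable_iff] at h ⊢
  refine IntegrableOn.congr_fun h.re (fun t ht => ?_) measurableSet_uIoc
  rw [uIoc_of_le zero_le_one] at ht
  simp only [RCLike.re_to_complex, betaIntegrand_eq_ofReal ht.1.le ht.2, Complex.ofReal_re]

lemma beta_eq_integral {a c : ℝ} (ha : 0 < a) (hc : 0 < c) :
    beta a c = ∫ t in (0 : ℝ)..1, t ^ (a - 1) * (1 - t) ^ (c - 1) := by
  have hcast : EqOn (fun t : ℝ => (t : ℂ) ^ ((a : ℂ) - 1) * (1 - (t : ℂ)) ^ ((c : ℂ) - 1))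
      (fun t => ↑(t ^ (a - 1) * (1 - t) ^ (c - 1))) (uIcc 0 1) := fun t ht => by
    rw [uIcc_of_le zero_le_one] at ht
    exact betaIntegrand_eq_ofReal ht.1 ht.2
  rw [beta_eq_betaIntegralReal a c ha hc, Complex.betaIntegral,
    intervalIntegral.integral_congr hcast, intervalIntegral.integral_ofReal, Complex.ofReal_re]

lemma intervalIntegrable_rpow_mul_rpow_sub_one {a c : ℝ} (ha : 0 < a) (hc : 0 < c) :
    IntervalIntegrable (fun t => t ^ (a - 1) * ((1 - t) ^ (c - 1) - 1)) volume 0 1 := by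
  simp only [mul_sub, mul_one]
  exact (intervalIntegrable_betaIntegrand ha hc).sub
    (intervalIntegral.intervalIntegrable_rpow' (by linarith))

lemma beta_sub_inv_eq_integral {a c : ℝ} (ha : 0 < a) (hc : 0 < c) :
    beta a c - 1 / a = ∫ t in (0 : ℝ)..1, t ^ (a - 1) * ((1 - t) ^ (c - 1) - 1) := by
  have hpow : ∫ t in (0 : ℝ)..1, t ^ (a - 1) = 1 / a := by
    rw [integral_rpow (Or.inl (by linarith)), sub_add_cancel, one_rpow, zero_rpow ha.ne']
    ring
  simp only [mul_sub, mul_one]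
  rw [intervalIntegral.integral_sub (intervalIntegrable_betaIntegrand ha hc)
    (intervalIntegral.intervalIntegrable_rpow' (by linarith)), hpow, beta_eq_integral ha hc]

lemma beta_sub_inv_sub_beta_sub_inv_pos {a a' c : ℝ} (ha : 0 < a) (ha' : 0 < a') (hc : 0 < c)
    (hpos : ∀ t ∈ Ioo (0 : ℝ) 1, 0 < (t ^ (a - 1) - t ^ (a' - 1)) * ((1 - t) ^ (c - 1) - 1)) :
    0 < (beta a c - 1 / a) - (beta a' c - 1 / a') := by
  rw [beta_sub_inv_eq_integral ha hc, beta_sub_inv_eq_integral ha' hc,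
    ← intervalIntegral.integral_sub (intervalIntegrable_rpow_mul_rpow_sub_one ha hc)
      (intervalIntegrable_rpow_mul_rpow_sub_one ha' hc)]
  refine intervalIntegral.intervalIntegral_pos_of_pos_on
    ((intervalIntegrable_rpow_mul_rpow_sub_one ha hc).sub
      (intervalIntegrable_rpow_mul_rpow_sub_one ha' hc)) (fun t ht => ?_) one_pos
  simpa only [sub_mul] using hpos t ht

lemma strictAntiOn_beta_sub_inv {c : ℝ} (hc₀ : 0 < c) (hc₁ : c < 1) :
    StrictAntiOn (fun a => beta a c - 1 / a) (Ioi 0) := fun a ha a' ha' hlt =>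
  sub_pos.mp <| beta_sub_inv_sub_beta_sub_inv_pos ha ha' hc₀ fun t ht =>
    mul_pos (sub_pos.mpr (rpow_lt_rpow_of_exponent_gt ht.1 ht.2 (by linarith)))
      (sub_pos.mpr (one_lt_rpow_of_pos_of_lt_one_of_neg (by linarith [ht.2]) (by linarith [ht.1])
        (by linarith)))

lemma strictMonoOn_beta_sub_inv {c : ℝ} (hc : 1 < c) :
    StrictMonoOn (fun a => beta a c - 1 / a) (Ioi 0) := fun a ha a' ha' hlt =>
  sub_pos.mp <| beta_sub_inv_sub_beta_sub_inv_pos ha' ha (by linarith) fun t ht =>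
    mul_pos_of_neg_of_neg (sub_neg.mpr (rpow_lt_rpow_of_exponent_gt ht.1 ht.2 (by linarith)))
      (sub_neg.mpr (rpow_lt_one (by linarith [ht.2]) (by linarith [ht.1]) (by linarith)))

lemma tendsto_beta_sub_inv {c : ℝ} (hc : 0 < c) :
    Tendsto (fun a => beta a c - 1 / a) (𝓝[>] 0) (𝓝 (digamma 1 - digamma c)) := by
  have hΓc := (Gamma_pos_of_pos hc).ne'
  have hnum : HasDerivAt (fun x => Gamma (x + 1) * Gamma c) (digamma 1 * Gamma c) 0 := by
    have h : HasDerivAt Gamma (digamma 1) (0 + 1) := by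
      simpa using hasDerivAt_Gamma_of_pos one_pos
    exact (h.comp_add_const 0 1).mul_const _
  have hden : HasDerivAt (fun x => Gamma (x + c)) (Gamma c * digamma c) 0 := by
    have h : HasDerivAt Gamma (Gamma c * digamma c) (0 + c) := by
      simpa using hasDerivAt_Gamma_of_pos hc
    exact h.comp_add_const 0 c
  have hslope := (hnum.div hden (by rwa [zero_add])).tendsto_slope_zero_right
  refine (hslope.congr' ?_).trans (le_of_eq ?_)
  · filter_upwards [self_mem_nhdsWithin] with a (ha : 0 < a)
    simp only [Pi.div_apply, smul_eq_mul, zero_add, Gamma_one, one_mul]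
    rw [beta, Gamma_add_one ha.ne']
    field_simp [(Gamma_pos_of_pos (add_pos ha hc)).ne']
  · congr 1
    rw [zero_add, zero_add, Gamma_one, one_mul]
    field_simp

lemma StrictMonoOn.lt_of_tendsto_nhdsGT {f : ℝ → ℝ} {x₀ L a : ℝ}
    (hf : StrictMonoOn f (Ioi x₀))
    (hL : Tendsto f (𝓝[>] x₀) (𝓝 L)) (ha : x₀ < a) : L < f a := by
  have hmid : (x₀ + a) / 2 ∈ Ioo x₀ a := ⟨by linarith, by linarith⟩
  have hle : L ≤ f ((x₀ + a) / 2) := by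
    refine le_of_tendsto hL ?_
    filter_upwards [Ioo_mem_nhdsGT hmid.1] with x hx
    exact (hf hx.1 hmid.1 hx.2).le
  exact hle.trans_lt (hf hmid.1 ha hmid.2)

lemma StrictAntiOn.lt_of_tendsto_nhdsGT {f : ℝ → ℝ} {x₀ L a : ℝ}
    (hf : StrictAntiOn f (Ioi x₀))
    (hL : Tendsto f (𝓝[>] x₀) (𝓝 L)) (ha : x₀ < a) : f a < L :=
  neg_lt_neg_iff.mp (hf.neg.lt_of_tendsto_nhdsGT hL.neg ha)

lemma beta_sub_inv_lt_digamma_one_sub_digamma {a c : ℝ} (ha : 0 < a) (hc₀ : 0 < c)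
    (hc₁ : c < 1) :
    beta a c - 1 / a < digamma 1 - digamma c :=
  (strictAntiOn_beta_sub_inv hc₀ hc₁).lt_of_tendsto_nhdsGT (tendsto_beta_sub_inv hc₀) ha

lemma digamma_one_lt {c : ℝ} (hc : 1 < c) : digamma 1 < digamma c := by
  have h := (strictMonoOn_beta_sub_inv hc).lt_of_tendsto_nhdsGT
    (tendsto_beta_sub_inv (by linarith)) one_pos
  rw [beta_one_left (by linarith), div_one] at h
  linarith [(div_lt_one (by linarith : (0 : ℝ) < c)).mpr hc]

theorem stmt_13 (a b : ℝ) (ha : 0 < a) (hb : b ∈ Set.Ioo (0:ℝ) 1) :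
    Real.Gamma a * Real.Gamma b / Real.Gamma (a + b) < -eulerGamma + 1 / a - digamma b ∧
    -eulerGamma + 1 / a - digamma b < 1 / a + 1 / b := by
  obtain ⟨hb₀, hb₁⟩ := hb
  have hbeta := beta_sub_inv_lt_digamma_one_sub_digamma ha hb₀ hb₁
  have hmono := digamma_one_lt (by linarith : 1 < b + 1)
  rw [digamma_add_one hb₀] at hmono
  rw [eulerGamma, neg_neg]
  exact ⟨by change beta a b < _; linarith, by linarith⟩
end

section
/- For a, b > 0 with a + b ≤ 1 and a ≤ 1, b ≤ 1, the quantity θ(a,b) = -1 + (ab/(a+b))·(Γ(a+b+1)/(Γ(a+1)Γ(b+1)))² + ab/(a+b+1) satisfies θ(a,b) ≤ θ(1/2, 1) = -1/20 < 0. -/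
/-!
With `B(a, b) = Γ(a) Γ(b) / Γ(a + b) = ∫₀¹ x^(a-1) (1-x)^(b-1) dx`, the Gamma ratio in `θ` is
`(a + b) / (a b B(a, b))`. For `a, b ≤ 1` both factors of the integrand are at least `1`, so
`u v ≥ u + v - 1` gives `B(a, b) ≥ 1/a + 1/b - 1`, i.e. `a b B(a, b) ≥ a + b - a b ≥ 3 (a + b) / 4`
when `a + b ≤ 1`. Then the middle term of `θ` is at most `4/9` and the last one at most
`a b ≤ 1/4`, so `θ(a, b) ≤ -1 + 4/9 + 1/4 < -1/20`. The value `θ(1/2, 1)` uses `Γ(3/2) = √π / 2`.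
-/

open Real MeasureTheory intervalIntegral ProbabilityTheory

lemma ofReal_rpow_mul_one_sub_rpow {x : ℝ} (hx0 : 0 ≤ x) (hx1 : x ≤ 1) (a b : ℝ) :
    ((x ^ (a - 1) * (1 - x) ^ (b - 1) : ℝ) : ℂ)
      = (x : ℂ) ^ ((a : ℂ) - 1) * (1 - (x : ℂ)) ^ ((b : ℂ) - 1) := by
  push_cast
  rw [Complex.ofReal_cpow hx0, Complex.ofReal_cpow (sub_nonneg.2 hx1)]
  push_cast
  ring

lemma intervalIntegrable_rpow_mul_one_sub_rpow {a b : ℝ} (ha : 0 < a) (hb : 0 < b) :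
    IntervalIntegrable (fun x : ℝ => x ^ (a - 1) * (1 - x) ^ (b - 1)) volume 0 1 := by
  refine (Complex.betaIntegral_convergent (u := a) (v := b) (by simpa) (by simpa)).norm.congr ?_
  rw [Set.uIoc_of_le zero_le_one]
  intro x hx
  dsimp only
  rw [← ofReal_rpow_mul_one_sub_rpow hx.1.le hx.2, Complex.norm_real, Real.norm_of_nonneg]
  exact mul_nonneg (rpow_nonneg hx.1.le _) (rpow_nonneg (sub_nonneg.2 hx.2) _)

lemma beta_eq_intervalIntegral {a b : ℝ} (ha : 0 < a) (hb : 0 < b) :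
    beta a b = ∫ x in (0 : ℝ)..1, x ^ (a - 1) * (1 - x) ^ (b - 1) := by
  have h : Complex.betaIntegral a b
      = ((∫ x in (0 : ℝ)..1, x ^ (a - 1) * (1 - x) ^ (b - 1) : ℝ) : ℂ) := by
    rw [Complex.betaIntegral, ← integral_ofReal]
    refine integral_congr fun x hx => ?_
    rw [Set.uIcc_of_le zero_le_one] at hx
    exact (ofReal_rpow_mul_one_sub_rpow hx.1 hx.2 a b).symm
  rw [beta_eq_betaIntegralReal a b ha hb, h, Complex.ofReal_re]

lemma integral_rpow_sub_one_zero_one {a : ℝ} (ha : 0 < a) :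
    ∫ x in (0 : ℝ)..1, x ^ (a - 1) = 1 / a := by
  rw [integral_rpow (Or.inl (by linarith)), sub_add_cancel, one_rpow, zero_rpow ha.ne']
  ring

lemma one_div_add_one_div_sub_one_le_beta {a b : ℝ} (ha : 0 < a) (hb : 0 < b) (ha1 : a ≤ 1)
    (hb1 : b ≤ 1) : 1 / a + 1 / b - 1 ≤ beta a b := by
  have hA : IntervalIntegrable (fun x : ℝ => x ^ (a - 1)) volume 0 1 :=
    intervalIntegrable_rpow' (by linarith)
  have hB : IntervalIntegrable (fun x : ℝ => (1 - x) ^ (b - 1)) volume 0 1 := by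
    have h := (intervalIntegrable_rpow' (a := 0) (b := 1) (by linarith : -1 < b - 1)).comp_sub_left
      1
    norm_num at h
    exact h.symm
  have hIB : ∫ x in (0 : ℝ)..1, (1 - x) ^ (b - 1) = 1 / b := by
    have h := integral_comp_sub_left (fun x : ℝ => x ^ (b - 1)) 1 (a := 0) (b := 1)
    norm_num at h
    rw [h, integral_rpow_sub_one_zero_one hb]
  -- `u v ≥ u + v - 1` because both factors are `≥ 1` when `a, b ≤ 1`
  have hpt : ∀ x ∈ Set.Icc (0 : ℝ) 1,
      x ^ (a - 1) + (1 - x) ^ (b - 1) - 1 ≤ x ^ (a - 1) * (1 - x) ^ (b - 1) := by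
    rintro x ⟨hx0, hx1⟩
    rcases hx0.eq_or_lt with rfl | hx0
    · simp
    rcases hx1.eq_or_lt with rfl | hx1
    · simp
    have hu := one_le_rpow_of_pos_of_le_one_of_nonpos hx0 hx1.le (by linarith : a - 1 ≤ 0)
    have hv := one_le_rpow_of_pos_of_le_one_of_nonpos (sub_pos.2 hx1) (by linarith)
      (by linarith : b - 1 ≤ 0)
    nlinarith
  calc 1 / a + 1 / b - 1 = ∫ x in (0 : ℝ)..1, (x ^ (a - 1) + (1 - x) ^ (b - 1) - 1) := by
        rw [integral_sub (hA.add hB) intervalIntegrable_const, integral_add hA hB,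
          integral_rpow_sub_one_zero_one ha, hIB]
        simp
    _ ≤ ∫ x in (0 : ℝ)..1, x ^ (a - 1) * (1 - x) ^ (b - 1) :=
        integral_mono_on zero_le_one ((hA.add hB).sub intervalIntegrable_const)
          (intervalIntegrable_rpow_mul_one_sub_rpow ha hb) hpt
    _ = beta a b := (beta_eq_intervalIntegral ha hb).symm

lemma Gamma_add_add_one_div_Gamma_add_one_mul {a b : ℝ} (ha : 0 < a) (hb : 0 < b) :
    Gamma (a + b + 1) / (Gamma (a + 1) * Gamma (b + 1)) = (a + b) / (a * b * beta a b) := by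
  rw [Gamma_add_one ha.ne', Gamma_add_one hb.ne', Gamma_add_one (add_pos ha hb).ne', beta]
  have hΓ := (Gamma_pos_of_pos (add_pos ha hb)).ne'
  field_simp

lemma mul_div_mul_Gamma_ratio_sq_le {a b : ℝ} (ha : 0 < a) (hb : 0 < b) (hab : a + b ≤ 1) :
    a * b / (a + b) * (Gamma (a + b + 1) / (Gamma (a + 1) * Gamma (b + 1))) ^ 2
      ≤ 4 / 9 := by
  have hp : 0 < a * b := mul_pos ha hb
  have hamgm : a * b ≤ (a + b) / 4 := by nlinarith [sq_nonneg (a - b)]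
  have hB : 3 * (a + b) / 4 ≤ a * b * beta a b := by
    have h := one_div_add_one_div_sub_one_le_beta ha hb (by linarith) (by linarith)
    have hexpand : a * b * (1 / a + 1 / b - 1) = a + b - a * b := by field_simp; ring
    nlinarith [mul_le_mul_of_nonneg_left h hp.le]
  rw [Gamma_add_add_one_div_Gamma_add_one_mul ha hb]
  calc a * b / (a + b) * ((a + b) / (a * b * beta a b)) ^ 2
      = (a + b) * (a * b) / (a * b * beta a b) ^ 2 := by field_simp
    _ ≤ (a + b) * ((a + b) / 4) / (3 * (a + b) / 4) ^ 2 := by gcongr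
    _ = 4 / 9 := by field_simp; ring

theorem stmt_14_general (a b : ℝ) (ha : 0 < a) (hb : 0 < b)
    (hab : a + b ≤ 1) :
    -1 + a * b / (a + b) * (Real.Gamma (a + b + 1) / (Real.Gamma (a + 1) * Real.Gamma (b + 1))) ^ 2
        + a * b / (a + b + 1) ≤ -1/20 ∧
    -1 + (1/2 : ℝ) * 1 / ((1/2 : ℝ) + 1)
        * (Real.Gamma ((1/2 : ℝ) + 1 + 1) / (Real.Gamma ((1/2 : ℝ) + 1) * Real.Gamma (1 + 1))) ^ 2
        + (1/2 : ℝ) * 1 / ((1/2 : ℝ) + 1 + 1) = -1/20 := by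
  constructor
  · have hp : a * b ≤ 1 / 4 := by nlinarith [sq_nonneg (a - b)]
    have hlast : a * b / (a + b + 1) ≤ a * b :=
      div_le_self (mul_pos ha hb).le (by linarith)
    linarith [mul_div_mul_Gamma_ratio_sq_le ha hb hab]
  · have hΓ : Gamma (1 / 2 + 1) = √π / 2 := by
      rw [Gamma_add_one (by norm_num), Gamma_one_half_eq]; ring
    have hratio : Gamma (1 / 2 + 1 + 1) / (Gamma (1 / 2 + 1) * Gamma (1 + 1)) = 3 / 2 := by
      have hπ : 0 < √π := sqrt_pos.2 pi_pos
      rw [Gamma_add_one (by norm_num), hΓ, one_add_one_eq_two, Gamma_two]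
      field_simp
      ring
    rw [hratio]
    norm_num

theorem stmt_14 (a b : ℝ) (ha : 0 < a) (hb : 0 < b) (ha1 : a ≤ 1) (hb1 : b ≤ 1)
    (hab : a + b ≤ 1) :
    -1 + a * b / (a + b) * (Real.Gamma (a + b + 1) / (Real.Gamma (a + 1) * Real.Gamma (b + 1))) ^ 2
        + a * b / (a + b + 1) ≤ -1/20 ∧
    -1 + (1/2 : ℝ) * 1 / ((1/2 : ℝ) + 1)
        * (Real.Gamma ((1/2 : ℝ) + 1 + 1) / (Real.Gamma ((1/2 : ℝ) + 1) * Real.Gamma (1 + 1))) ^ 2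
        + (1/2 : ℝ) * 1 / ((1/2 : ℝ) + 1 + 1) = -1/20 :=
  stmt_14_general a b ha hb hab
end
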